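/- arXiv:2109.14309 — 2 statements merged into one kernel-verified Lean document; each statement's English description precedes it below -/
import Mathlib

section
/- The CRPS loss on probability distribution functions over [a,b] is (2/(b-a))-mixable: for any probability vector (q_1,…,q_N) and distribution functions F_1,…,F_N, the function F(u) = 1/2 - (1/4) ln( (Σ_i q_i e^{-2 F_i(u)^2}) / (Σ_i q_i e^{-2(1-F_i(u))^2}) ) satisfies exp(-(2/(b-a)) CRPS(F,y)) ≥ Σ_i q_i exp(-(2/(b-a)) CRPS(F_i,y)) for all y ∈ [a,b]. -/
open MeasureTheory Finset

/-- Heaviside function: 0 for x < 0 and 1 for x ≥ 0. -/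
noncomputable def Heav (x : ℝ) : ℝ := if x < 0 then 0 else 1

/-- Continuous Ranked Probability Score on the interval [a,b]. -/
noncomputable def CRPS (a b : ℝ) (F : ℝ → ℝ) (y : ℝ) : ℝ :=
  ∫ u in a..b, (F u - Heav (u - y)) ^ 2

/-- A probability distribution function on [a,b]: nondecreasing, right-continuous,
with values in [0,1], F(a)=0 and F(b)=1. -/
def IsPDF (a b : ℝ) (F : ℝ → ℝ) : Prop :=
  MonotoneOn F (Set.Icc a b) ∧ (∀ x ∈ Set.Icc a b, F x ∈ Set.Icc (0:ℝ) 1) ∧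
  F a = 0 ∧ F b = 1 ∧ ∀ x ∈ Set.Ico a b, ContinuousWithinAt F (Set.Ici x) x

/-!
Pointwise in `u`, the CRPS integrand is the square loss of the prediction `F u` against the
binary outcome `Heav (u - y)`, and the square loss on `{0, 1}` is `2`-mixable with Vovk's
substitution function `G`: Hoeffding's lemma for a Bernoulli(`G`) variable gives
`(1 - G) e^{2G² - 2p²} + G e^{2(1-G)² - 2(1-p)²} ≤ 1` for every `p`, and averaging this over
the experts forces `∑ qᵢ e^{-2(pᵢ - h)²} ≤ e^{-2(G - h)²}` for `h ∈ {0, 1}`. Since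
`-(2/(b-a)) CRPS` is the average of `-2 (F u - Heav (u - y))²` over the uniform probability on
`[a, b]`, taking logarithms, integrating, and using the superadditivity of the geometric mean
`f ↦ exp (∫ log f)` gives the claim.
-/

open ProbabilityTheory Real Set

theorem bernoulli_mgf_le {p : ℝ} (hp : p ∈ Icc (0 : ℝ) 1) (t : ℝ) :
    (1 - p) * exp (-t * p) + p * exp (t * (1 - p)) ≤ exp (t ^ 2 / 8) := by
  obtain ⟨hp0, hp1⟩ := hp
  let μ : Measure Bool :=
    ENNReal.ofReal (1 - p) • Measure.dirac false + ENNReal.ofReal p • Measure.dirac true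
  have : IsProbabilityMeasure μ :=
    ⟨by simp [μ, ← ENNReal.ofReal_add (sub_nonneg.2 hp1) hp0]⟩
  have hμ (g : Bool → ℝ) : ∫ b, g b ∂μ = (1 - p) * g false + p * g true := by
    rw [integral_add_measure (.smul_measure .of_finite ENNReal.ofReal_ne_top)
      (.smul_measure .of_finite ENNReal.ofReal_ne_top), integral_smul_measure,
      integral_smul_measure]
    simp [ENNReal.toReal_ofReal hp0, ENNReal.toReal_ofReal (sub_nonneg.2 hp1)]
  let X : Bool → ℝ := fun b => if b then 1 - p else -p
  have hX : ∀ᵐ b ∂μ, X b ∈ Icc (-p) (1 - p) :=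
    .of_forall fun b => by cases b <;> simp [X]
  have hmean : μ[X] = 0 := by rw [hμ]; simp only [X, Bool.false_eq_true, ↓reduceIte]; ring
  calc (1 - p) * exp (-t * p) + p * exp (t * (1 - p)) = mgf X μ t := by
        rw [mgf, hμ]; simp [X]
    _ ≤ exp ((‖1 - p - -p‖₊ / 2) ^ 2 * t ^ 2 / 2) :=
        (hasSubgaussianMGF_of_mem_Icc_of_integral_eq_zero
          Measurable.of_discrete.aemeasurable hX hmean).mgf_le t
    _ = exp (t ^ 2 / 8) := by norm_num; ring_nf

theorem one_sub_mul_exp_add_mul_exp_le_one {G : ℝ} (hG : G ∈ Icc (0 : ℝ) 1) (p : ℝ) :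
    (1 - G) * exp (2 * G ^ 2 - 2 * p ^ 2) + G * exp (2 * (1 - G) ^ 2 - 2 * (1 - p) ^ 2) ≤ 1 := by
  set t := 4 * (p - G)
  calc (1 - G) * exp (2 * G ^ 2 - 2 * p ^ 2) + G * exp (2 * (1 - G) ^ 2 - 2 * (1 - p) ^ 2)
      = ((1 - G) * exp (-t * G) + G * exp (t * (1 - G))) * exp (-(t ^ 2 / 8)) := by
        rw [add_mul, mul_assoc, mul_assoc, ← exp_add, ← exp_add]
        congr 3 <;> ring
    _ ≤ exp (t ^ 2 / 8) * exp (-(t ^ 2 / 8)) := by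
        gcongr; exact bernoulli_mgf_le hG t
    _ = 1 := by rw [← exp_add, add_neg_cancel, exp_zero]

section Mixture

variable {ι : Type*} [Fintype ι] {q : ι → ℝ}

theorem sum_mul_exp_pos (hq0 : ∀ i, 0 ≤ q i) (hq1 : ∑ i, q i = 1) (x : ι → ℝ) :
    0 < ∑ i, q i * exp (x i) := by
  obtain ⟨i, -, hi⟩ := exists_lt_of_sum_lt (by simp [hq1] : ∑ _i : ι, (0 : ℝ) < ∑ i, q i)
  exact sum_pos' (fun j _ => mul_nonneg (hq0 j) (exp_pos _).le) ⟨i, mem_univ i, by positivity⟩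

theorem log_sum_mul_exp_mem_Icc (hq0 : ∀ i, 0 ≤ q i) (hq1 : ∑ i, q i = 1) {x : ι → ℝ} {m M : ℝ}
    (hx : ∀ i, x i ∈ Icc m M) : log (∑ i, q i * exp (x i)) ∈ Icc m M := by
  obtain ⟨hm, hM⟩ : ∑ i, q i * exp (x i) ∈ Icc (exp m) (exp M) :=
    (convex_Icc _ _).sum_mem (fun i _ => hq0 i) hq1
      fun i _ => ⟨exp_le_exp.2 (hx i).1, exp_le_exp.2 (hx i).2⟩
  exact ⟨by simpa using log_le_log (exp_pos m) hm,
    by simpa using log_le_log ((exp_pos m).trans_le hm) hM⟩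

theorem neg_two_mul_sq_sub_mem_Icc {s t : ℝ} (hs : s ∈ Icc (0 : ℝ) 1) (ht : t ∈ Icc (0 : ℝ) 1) :
    -2 * (s - t) ^ 2 ∈ Icc (-2 : ℝ) 0 := by
  obtain ⟨hs0, hs1⟩ := hs
  obtain ⟨ht0, ht1⟩ := ht
  constructor <;> nlinarith

/-- Vovk's substitution function for the square loss with outcomes in `{0, 1}`. -/
noncomputable def squareLossSubst (q p : ι → ℝ) : ℝ :=
  1 / 2 - (1 / 4) * log ((∑ i, q i * exp (-2 * p i ^ 2)) / ∑ i, q i * exp (-2 * (1 - p i) ^ 2))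

theorem log_sum_mul_exp_square_loss_mem_Icc (hq0 : ∀ i, 0 ≤ q i) (hq1 : ∑ i, q i = 1)
    {p : ι → ℝ} (hp : ∀ i, p i ∈ Icc (0 : ℝ) 1) :
    log (∑ i, q i * exp (-2 * p i ^ 2)) ∈ Icc (-2 : ℝ) 0 ∧
      log (∑ i, q i * exp (-2 * (1 - p i) ^ 2)) ∈ Icc (-2 : ℝ) 0 := by
  constructor <;> refine log_sum_mul_exp_mem_Icc hq0 hq1 fun i => ?_
  · simpa using neg_two_mul_sq_sub_mem_Icc (hp i) (t := 0) (by simp)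
  · simpa [sub_sq_comm] using neg_two_mul_sq_sub_mem_Icc (hp i) (t := 1) (by simp)

theorem squareLossSubst_mem_Icc (hq0 : ∀ i, 0 ≤ q i) (hq1 : ∑ i, q i = 1)
    {p : ι → ℝ} (hp : ∀ i, p i ∈ Icc (0 : ℝ) 1) : squareLossSubst q p ∈ Icc (0 : ℝ) 1 := by
  obtain ⟨⟨h0l, h0u⟩, ⟨h1l, h1u⟩⟩ := log_sum_mul_exp_square_loss_mem_Icc hq0 hq1 hp
  rw [squareLossSubst, log_div (sum_mul_exp_pos hq0 hq1 _).ne' (sum_mul_exp_pos hq0 hq1 _).ne']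
  constructor <;> linarith

theorem log_sum_mul_exp_sq_sub_le (hq0 : ∀ i, 0 ≤ q i) (hq1 : ∑ i, q i = 1)
    {p : ι → ℝ} (hp : ∀ i, p i ∈ Icc (0 : ℝ) 1) {h : ℝ} (hh : h = 0 ∨ h = 1) :
    log (∑ i, q i * exp (-2 * (p i - h) ^ 2)) ≤ -2 * (squareLossSubst q p - h) ^ 2 := by
  set S₀ := ∑ i, q i * exp (-2 * p i ^ 2)
  set S₁ := ∑ i, q i * exp (-2 * (1 - p i) ^ 2)
  set G := squareLossSubst q p
  have hS₀ : 0 < S₀ := sum_mul_exp_pos hq0 hq1 _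
  have hS₁ : 0 < S₁ := sum_mul_exp_pos hq0 hq1 _
  have hG := squareLossSubst_mem_Icc hq0 hq1 hp
  -- `G` is chosen so that the two outcomes leave the same slack
  have hbal : 2 * G ^ 2 + log S₀ = 2 * (1 - G) ^ 2 + log S₁ := by
    have hG_eq : G = 1 / 2 - 1 / 4 * (log S₀ - log S₁) := by
      rw [← log_div hS₀.ne' hS₁.ne']; rfl
    rw [hG_eq]; ring
  have hslack : 2 * G ^ 2 + log S₀ ≤ 0 := by
    rw [← exp_le_one_iff]
    calc exp (2 * G ^ 2 + log S₀)
        = (1 - G) * exp (2 * G ^ 2 + log S₀) + G * exp (2 * (1 - G) ^ 2 + log S₁) := by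
          rw [← hbal]; ring
      _ = ∑ i, q i * ((1 - G) * exp (2 * G ^ 2 - 2 * p i ^ 2)
            + G * exp (2 * (1 - G) ^ 2 - 2 * (1 - p i) ^ 2)) := by
          simp only [exp_add, exp_log hS₀, exp_log hS₁, S₀, S₁, mul_sum, ← sum_add_distrib]
          refine sum_congr rfl fun i _ => ?_
          rw [sub_eq_add_neg (2 * G ^ 2), sub_eq_add_neg (2 * (1 - G) ^ 2), ← neg_mul, ← neg_mul,
            exp_add, exp_add]
          ring
      _ ≤ ∑ i, q i * 1 := by
          gcongr with i; exacts [hq0 i, one_sub_mul_exp_add_mul_exp_le_one hG (p i)]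
      _ = 1 := by simp [hq1]
  rcases hh with rfl | rfl
  · simp only [sub_zero]; linarith
  · simp only [sub_sq_comm _ (1 : ℝ)]; linarith

end Mixture

section GeometricMean

variable {α ι : Type*} [MeasurableSpace α] {μ : Measure α} [IsProbabilityMeasure μ]

/-- Superadditivity of the geometric mean `f ↦ exp (∫ log f ∂μ)`. -/
theorem sum_exp_integral_log_le (s : Finset ι) {f : ι → α → ℝ}
    (hf_pos : ∀ i ∈ s, ∀ᵐ x ∂μ, 0 < f i x) (hf_int : ∀ i ∈ s, Integrable (fun x => log (f i x)) μ)
    (hsum_int : Integrable (fun x => log (∑ i ∈ s, f i x)) μ) :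
    ∑ i ∈ s, exp (∫ x, log (f i x) ∂μ) ≤ exp (∫ x, log (∑ i ∈ s, f i x) ∂μ) := by
  rcases s.eq_empty_or_nonempty with rfl | hs
  · simp
  set B := fun i => exp (∫ x, log (f i x) ∂μ)
  set Z := ∑ i ∈ s, B i
  have hZ : 0 < Z := sum_pos (fun i _ => exp_pos _) hs
  set w := fun i => B i / Z
  have hw : ∀ i, 0 < w i := fun i => div_pos (exp_pos _) hZ
  have hw_sum : ∑ i ∈ s, w i = 1 := by rw [← sum_div, div_self hZ.ne']
  -- pointwise weighted Jensen for `log`, with the weights that make it tight after integration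
  have hpt : ∀ᵐ x ∂μ, ∑ i ∈ s, w i * (log (f i x) - log (w i)) ≤ log (∑ i ∈ s, f i x) := by
    filter_upwards [s.eventually_all.2 hf_pos] with x hx
    calc ∑ i ∈ s, w i * (log (f i x) - log (w i)) = ∑ i ∈ s, w i • log (f i x / w i) :=
          sum_congr rfl fun i hi => by rw [smul_eq_mul, log_div (hx i hi).ne' (hw i).ne']
      _ ≤ log (∑ i ∈ s, w i • (f i x / w i)) :=
          strictConcaveOn_log_Ioi.concaveOn.le_map_sum (fun i _ => (hw i).le) hw_sum
            fun i hi => div_pos (hx i hi) (hw i)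
      _ = log (∑ i ∈ s, f i x) := by
          simp only [smul_eq_mul, mul_div_cancel₀ _ (hw _).ne']
  have hterm_int : ∀ i ∈ s, Integrable (fun x => w i * (log (f i x) - log (w i))) μ :=
    fun i hi => ((hf_int i hi).sub (integrable_const _)).const_mul _
  have hint : ∫ x, ∑ i ∈ s, w i * (log (f i x) - log (w i)) ∂μ = log Z := by
    rw [integral_finsetSum s hterm_int]
    calc ∑ i ∈ s, ∫ x, w i * (log (f i x) - log (w i)) ∂μ
        = ∑ i ∈ s, w i * log Z := by
          refine sum_congr rfl fun i hi => ?_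
          rw [integral_const_mul, integral_sub (hf_int i hi) (integrable_const _), integral_const,
            probReal_univ, one_smul, log_div (exp_pos _).ne' hZ.ne', log_exp]
          ring
      _ = log Z := by rw [← sum_mul, hw_sum, one_mul]
  calc ∑ i ∈ s, B i = exp (log Z) := (exp_log hZ).symm
    _ ≤ _ := exp_le_exp.2 (hint ▸ integral_mono_ae (integrable_finsetSum s hterm_int) hsum_int hpt)

theorem sum_mul_exp_integral_le [Fintype ι] {q : ι → ℝ} (hq0 : ∀ i, 0 ≤ q i) {φ : ι → α → ℝ}
    (hφ : ∀ i, Integrable (φ i) μ) (hS : Integrable (fun x => log (∑ i, q i * exp (φ i x))) μ) :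
    ∑ i, q i * exp (∫ x, φ i x ∂μ) ≤ exp (∫ x, log (∑ i, q i * exp (φ i x)) ∂μ) := by
  set s := univ.filter fun i => 0 < q i
  have hq_pos : ∀ i ∈ s, 0 < q i := fun i hi => (mem_filter.1 hi).2
  have hs_sum (g : ι → ℝ) : ∑ i ∈ s, q i * g i = ∑ i, q i * g i :=
    sum_filter_of_ne fun i _ hi => (hq0 i).lt_of_ne' (left_ne_zero_of_mul hi)
  have hlog : ∀ i ∈ s, ∀ x, log (q i * exp (φ i x)) = log (q i) + φ i x := fun i hi x => by
    rw [log_mul (hq_pos i hi).ne' (exp_pos _).ne', log_exp]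
  calc ∑ i, q i * exp (∫ x, φ i x ∂μ)
      = ∑ i ∈ s, exp (∫ x, log (q i * exp (φ i x)) ∂μ) := by
        rw [← hs_sum]
        refine sum_congr rfl fun i hi => ?_
        simp_rw [hlog i hi]
        rw [integral_add (integrable_const _) (hφ i), integral_const, probReal_univ, one_smul,
          exp_add, exp_log (hq_pos i hi)]
    _ ≤ exp (∫ x, log (∑ i ∈ s, q i * exp (φ i x)) ∂μ) :=
        sum_exp_integral_log_le s
          (fun i hi => .of_forall fun x => mul_pos (hq_pos i hi) (exp_pos _))
          (fun i hi => by simp_rw [hlog i hi]; exact (integrable_const _).add (hφ i))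
          (by simpa only [hs_sum] using hS)
    _ = _ := by simp only [hs_sum]

end GeometricMean

theorem sum_mul_exp_integral_sq_sub_le {α ι : Type*} [MeasurableSpace α] [Fintype ι]
    {μ : Measure α} [IsProbabilityMeasure μ] {q : ι → ℝ} (hq0 : ∀ i, 0 ≤ q i)
    (hq1 : ∑ i, q i = 1) {p : ι → α → ℝ} (hp_meas : ∀ i, AEMeasurable (p i) μ)
    (hp : ∀ i, ∀ᵐ x ∂μ, p i x ∈ Icc (0 : ℝ) 1) {h : α → ℝ} (hh_meas : AEMeasurable h μ)
    (hh : ∀ x, h x = 0 ∨ h x = 1) :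
    ∑ i, q i * exp (-2 * ∫ x, (p i x - h x) ^ 2 ∂μ) ≤
      exp (-2 * ∫ x, (squareLossSubst q (fun i => p i x) - h x) ^ 2 ∂μ) := by
  have hh_mem : ∀ x, h x ∈ Icc (0 : ℝ) 1 := fun x => by rcases hh x with hx | hx <;> simp [hx]
  have hp_all : ∀ᵐ x ∂μ, ∀ i, p i x ∈ Icc (0 : ℝ) 1 := ae_all_iff.2 hp
  have hloss : ∀ᵐ x ∂μ, ∀ i, -2 * (p i x - h x) ^ 2 ∈ Icc (-2 : ℝ) 0 := by
    filter_upwards [hp_all] with x hx i using neg_two_mul_sq_sub_mem_Icc (hx i) (hh_mem x)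
  have hloss_int : ∀ i, Integrable (fun x => -2 * (p i x - h x) ^ 2) μ := fun i =>
    .of_mem_Icc (-2) 0 (by fun_prop) (by filter_upwards [hloss] with x hx using hx i)
  have hmix_int : Integrable (fun x => log (∑ i, q i * exp (-2 * (p i x - h x) ^ 2))) μ :=
    .of_mem_Icc (-2) 0 (by fun_prop)
      (by filter_upwards [hloss] with x hx using log_sum_mul_exp_mem_Icc hq0 hq1 hx)
  have hsubst_int :
      Integrable (fun x => -2 * (squareLossSubst q (fun i => p i x) - h x) ^ 2) μ :=
    .of_mem_Icc (-2) 0 (by unfold squareLossSubst; fun_prop) (by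
      filter_upwards [hp_all] with x hx using
        neg_two_mul_sq_sub_mem_Icc (squareLossSubst_mem_Icc hq0 hq1 hx) (hh_mem x))
  calc ∑ i, q i * exp (-2 * ∫ x, (p i x - h x) ^ 2 ∂μ)
      = ∑ i, q i * exp (∫ x, -2 * (p i x - h x) ^ 2 ∂μ) := by simp only [integral_const_mul]
    _ ≤ exp (∫ x, log (∑ i, q i * exp (-2 * (p i x - h x) ^ 2)) ∂μ) :=
        sum_mul_exp_integral_le hq0 hloss_int hmix_int
    _ ≤ exp (∫ x, -2 * (squareLossSubst q (fun i => p i x) - h x) ^ 2 ∂μ) :=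
        exp_le_exp.2 <| integral_mono_ae hmix_int hsubst_int <| by
          filter_upwards [hp_all] with x hx using log_sum_mul_exp_sq_sub_le hq0 hq1 hx (hh x)
    _ = _ := by rw [integral_const_mul]

theorem measurable_Heav : Measurable Heav :=
  Measurable.ite measurableSet_Iio measurable_const measurable_const

theorem Heav_eq_zero_or_one (x : ℝ) : Heav x = 0 ∨ Heav x = 1 := by
  unfold Heav; split_ifs <;> simp

theorem CRPS_div_eq_integral_cond {a b : ℝ} (hab : a ≤ b) (F : ℝ → ℝ) (y : ℝ) :
    CRPS a b F y / (b - a) = ∫ u, (F u - Heav (u - y)) ^ 2 ∂volume[|Ioc a b] := by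
  rw [ProbabilityTheory.cond, integral_smul_measure, CRPS, intervalIntegral.integral_of_le hab,
    Real.volume_Ioc, ENNReal.toReal_inv, ENNReal.toReal_ofReal (sub_nonneg.2 hab), smul_eq_mul,
    div_eq_inv_mul]

/-- CRPS is (2/(b-a))-mixable, with the explicit aggregation formula giving the
learner's distribution function. -/
theorem crps_mixable (a b : ℝ) (hab : a < b) (N : ℕ)
    (F : Fin N → ℝ → ℝ) (hF : ∀ i, IsPDF a b (F i))
    (q : Fin N → ℝ) (hq0 : ∀ i, 0 ≤ q i) (hq1 : ∑ i, q i = 1) :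
    ∀ y ∈ Set.Icc a b,
      ∑ i, q i * Real.exp (-(2 / (b - a)) * CRPS a b (F i) y) ≤
        Real.exp (-(2 / (b - a)) * CRPS a b
          (fun u => 1/2 - (1/4) * Real.log
            ((∑ i, q i * Real.exp (-2 * (F i u) ^ 2)) /
             (∑ i, q i * Real.exp (-2 * (1 - F i u) ^ 2)))) y) := by
  intro y _
  have hscale (G : ℝ → ℝ) : -(2 / (b - a)) * CRPS a b G y =
      -2 * ∫ u, (G u - Heav (u - y)) ^ 2 ∂volume[|Ioc a b] := by
    rw [← CRPS_div_eq_integral_cond hab.le]; ring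
  simp only [hscale]
  have : IsProbabilityMeasure volume[|Ioc a b] :=
    cond_isProbabilityMeasure_of_finite (by simp [hab]) (by simp)
  refine sum_mul_exp_integral_sq_sub_le hq0 hq1 (fun i => ?_) (fun i => ?_)
    (measurable_Heav.comp (measurable_id.sub_const y)).aemeasurable
    (fun u => Heav_eq_zero_or_one (u - y))
  · exact (aemeasurable_restrict_of_monotoneOn measurableSet_Ioc
      ((hF i).1.mono Ioc_subset_Icc_self)).mono_ac Measure.smul_absolutelyContinuous
  · filter_upwards [ae_cond_mem measurableSet_Ioc] with u hu
      using (hF i).2.1 u (Ioc_subset_Icc_self hu)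
end

section
/- Exponential concavity of CRPS: for 0 < η ≤ 1/(2(b-a)), the map F ↦ exp(-η CRPS(F,y)) is concave on the convex set of probability distribution functions on [a,b], for each fixed y ∈ [a,b]. In particular, for a probability vector (q_1,…,q_N) and distribution functions F_1,…,F_N, the weighted average F = Σ_i q_i F_i satisfies exp(-η CRPS(F,y)) ≥ Σ_i q_i exp(-η CRPS(F_i,y)) for all y. -/
open MeasureTheory Finset

/-! For `κ ≤ 1/2` the function `x ↦ exp (-κ x²)` is concave on `[-1, 1]`, and `F ↦ F u - H(u - y)`
is affine with values in `[-1, 1]` on distribution functions, so each integrand of the CRPS is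
exp-concave. With `κ = η (b - a)`, `η · CRPS(F, y)` is the mean of `κ (F u - H(u - y))²` for `u`
uniform on `(a, b]`, and exp-concavity survives taking means: integrate the pointwise inequality
after bounding `log (t e^p + s e^q)` from below by its tangent plane at the pair of means, which is
Jensen's inequality for the convex function log-sum-exp. -/

open Real Set ProbabilityTheory

lemma concaveOn_exp_neg_mul_sq {κ : ℝ} (hκ₀ : 0 ≤ κ) (hκ : κ ≤ 1 / 2) :
    ConcaveOn ℝ (Icc (-1) 1) fun x => exp (-(κ * x ^ 2)) := by
  have hf' : ∀ x,
      HasDerivAt (fun x => exp (-(κ * x ^ 2))) (exp (-(κ * x ^ 2)) * (-2 * κ * x)) x :=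
    fun x => ((hasDerivAt_pow 2 x).const_mul κ).fun_neg.exp.congr_deriv (by ring)
  have hf'' : ∀ x, HasDerivAt (fun x => exp (-(κ * x ^ 2)) * (-2 * κ * x))
      (exp (-(κ * x ^ 2)) * (2 * κ * (2 * κ * x ^ 2 - 1))) x :=
    fun x => ((hf' x).mul ((hasDerivAt_id' x).const_mul (-2 * κ))).congr_deriv (by ring)
  refine concaveOn_of_hasDerivWithinAt2_nonpos (convex_Icc _ _) (by fun_prop)
    (fun x _ => (hf' x).hasDerivWithinAt) (fun x _ => (hf'' x).hasDerivWithinAt) ?_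
  intro x hx
  rw [interior_Icc] at hx
  have hx2 : x ^ 2 ≤ 1 := by nlinarith [hx.1, hx.2]
  have : 2 * κ * x ^ 2 - 1 ≤ 0 := by nlinarith
  exact mul_nonpos_of_nonneg_of_nonpos (exp_pos _).le
    (mul_nonpos_of_nonneg_of_nonpos (by linarith) this)

/-- `A / (A + B)` and `B / (A + B)` form the gradient of `(p, q) ↦ log (t e^p + s e^q)` at
`(m₁, m₂)`. -/
lemma mul_exp_tangent_le {t s : ℝ} (ht : 0 ≤ t) (hs : 0 ≤ s) (m₁ m₂ p q : ℝ) :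
    (t * exp m₁ + s * exp m₂) * exp (t * exp m₁ / (t * exp m₁ + s * exp m₂) * (p - m₁)
      + s * exp m₂ / (t * exp m₁ + s * exp m₂) * (q - m₂)) ≤ t * exp p + s * exp q := by
  set A := t * exp m₁
  set B := s * exp m₂
  have hA : 0 ≤ A := by positivity
  have hB : 0 ≤ B := by positivity
  rcases (add_nonneg hA hB).eq_or_lt with hAB | hAB
  · rw [← hAB, zero_mul]; positivity
  have hjensen := convexOn_exp.2 (mem_univ (p - m₁)) (mem_univ (q - m₂))
    (div_nonneg hA hAB.le) (div_nonneg hB hAB.le) (by field_simp)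
  calc _ ≤ (A + B) * (A / (A + B) * exp (p - m₁) + B / (A + B) * exp (q - m₂)) :=
        mul_le_mul_of_nonneg_left hjensen hAB.le
    _ = t * exp p + s * exp q := by
        field_simp
        simp only [A, B, exp_sub]
        field_simp

lemma concaveOn_exp_neg_integral {Ω E : Type*} [MeasurableSpace Ω] {μ : Measure Ω}
    [IsProbabilityMeasure μ] [AddCommGroup E] [Module ℝ E] {S : Set E} {φ : E → Ω → ℝ}
    (hint : ∀ x ∈ S, Integrable (φ x) μ) (hφ : ∀ᵐ ω ∂μ, ConcaveOn ℝ S fun x => exp (-φ x ω)) :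
    ConcaveOn ℝ S fun x => exp (-∫ ω, φ x ω ∂μ) := by
  have hS : Convex ℝ S := hφ.exists.choose_spec.1
  refine ⟨hS, fun x hx x' hx' t s ht hs hts => ?_⟩
  simp only [← integral_neg, smul_eq_mul]
  set m₁ := ∫ ω, -φ x ω ∂μ
  set m₂ := ∫ ω, -φ x' ω ∂μ
  set A := t * exp m₁
  set B := s * exp m₂
  have hAB : 0 < A + B := by
    rcases ht.eq_or_lt with rfl | ht'
    · simp [A, B, show s = 1 by linarith, exp_pos]
    · exact add_pos_of_pos_of_nonneg (by positivity) (by positivity)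
  have hP : Integrable (fun ω => -φ x ω) μ := (hint x hx).fun_neg
  have hQ : Integrable (fun ω => -φ x' ω) μ := (hint x' hx').fun_neg
  have hR : Integrable (fun ω => -φ (t • x + s • x') ω) μ :=
    (hint _ (hS hx hx' ht hs hts)).fun_neg
  have hP₀ : Integrable (fun ω => A / (A + B) * (-φ x ω - m₁)) μ :=
    (hP.sub (integrable_const m₁)).const_mul _
  have hQ₀ : Integrable (fun ω => B / (A + B) * (-φ x' ω - m₂)) μ :=
    (hQ.sub (integrable_const m₂)).const_mul _
  have hcentered : ∫ ω, A / (A + B) * (-φ x ω - m₁) + B / (A + B) * (-φ x' ω - m₂) ∂μ = 0 := by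
    rw [integral_add hP₀ hQ₀, integral_const_mul, integral_const_mul,
      integral_sub hP (integrable_const _), integral_sub hQ (integrable_const _)]
    simp [m₁, m₂]
  have hpt : ∀ᵐ ω ∂μ, log (A + B) + (A / (A + B) * (-φ x ω - m₁) + B / (A + B) * (-φ x' ω - m₂))
      ≤ -φ (t • x + s • x') ω := by
    filter_upwards [hφ] with ω hω
    rw [← exp_le_exp, exp_add, exp_log hAB]
    exact (mul_exp_tangent_le ht hs m₁ m₂ _ _).trans (hω.2 hx hx' ht hs hts)
  have hlog := integral_mono_ae ((integrable_const _).fun_add (hP₀.fun_add hQ₀)) hR hpt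
  rw [integral_add (integrable_const _) (hP₀.fun_add hQ₀), hcentered, integral_const,
    probReal_univ, one_smul, add_zero] at hlog
  rw [← exp_log hAB]
  exact exp_le_exp.2 hlog

lemma heav_mem_Icc (x : ℝ) : Heav x ∈ Icc (0 : ℝ) 1 := by
  unfold Heav; split_ifs <;> norm_num

lemma monotone_heav : Monotone Heav := by
  intro x x' hxx'
  unfold Heav
  split_ifs <;> linarith

lemma convex_setOf_isPDF (a b : ℝ) : Convex ℝ {F : ℝ → ℝ | IsPDF a b F} := by
  rintro F ⟨hFm, hFv, hFa, hFb, hFc⟩ G ⟨hGm, hGv, hGa, hGb, hGc⟩ t s ht hs hts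
  refine ⟨fun x hx x' hx' hxx' => ?_, fun x hx => ?_, ?_, ?_, fun x hx => ?_⟩
  · simp only [Pi.add_apply, Pi.smul_apply, smul_eq_mul]
    gcongr
    exacts [hFm hx hx' hxx', hGm hx hx' hxx']
  · simp only [Pi.add_apply, Pi.smul_apply, smul_eq_mul]
    obtain ⟨hF₀, hF₁⟩ := hFv x hx
    obtain ⟨hG₀, hG₁⟩ := hGv x hx
    constructor <;> nlinarith
  · simp [hFa, hGa]
  · simp [hFb, hGb, hts]
  · exact ((hFc x hx).const_smul t).add ((hGc x hx).const_smul s)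

lemma concaveOn_exp_neg_mul_sq_eval_sub {a b κ u c : ℝ} (hκ₀ : 0 ≤ κ) (hκ : κ ≤ 1 / 2)
    (hu : u ∈ Icc a b) (hc : c ∈ Icc (0 : ℝ) 1) :
    ConcaveOn ℝ {F : ℝ → ℝ | IsPDF a b F} fun F => exp (-(κ * (F u - c) ^ 2)) := by
  let g : (ℝ → ℝ) →ᵃ[ℝ] ℝ :=
    (LinearMap.proj u : (ℝ → ℝ) →ₗ[ℝ] ℝ).toAffineMap - AffineMap.const ℝ (ℝ → ℝ) c
  refine ((concaveOn_exp_neg_mul_sq hκ₀ hκ).comp_affineMap g).subset (fun F hF => ?_)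
    (convex_setOf_isPDF a b)
  obtain ⟨h₀, h₁⟩ := hF.2.1 u hu
  simp only [AffineMap.coe_sub, LinearMap.coe_toAffineMap, LinearMap.coe_proj, AffineMap.coe_const,
    Set.mem_preimage, Pi.sub_apply, Function.eval, Function.const_apply, Set.mem_Icc, g]
  constructor <;> linarith [hc.1, hc.2]

lemma IsPDF.integrableOn_sq_sub_heav {a b : ℝ} {F : ℝ → ℝ} (hF : IsPDF a b F) (y : ℝ) :
    IntegrableOn (fun u => (F u - Heav (u - y)) ^ 2) (Ioc a b) := by
  have hFm : AEMeasurable F (volume.restrict (Ioc a b)) :=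
    aemeasurable_restrict_of_monotoneOn measurableSet_Ioc (hF.1.mono Ioc_subset_Icc_self)
  have hH : Measurable fun u => Heav (u - y) :=
    monotone_heav.measurable.comp (measurable_id.sub_const y)
  refine IntegrableOn.of_bound measure_Ioc_lt_top
    ((hFm.sub hH.aemeasurable).pow_const 2).aestronglyMeasurable 1 ?_
  filter_upwards [ae_restrict_mem measurableSet_Ioc] with u hu
  obtain ⟨h₀, h₁⟩ := hF.2.1 u (Ioc_subset_Icc_self hu)
  obtain ⟨hH₀, hH₁⟩ := heav_mem_Icc (u - y)
  rw [norm_eq_abs, abs_of_nonneg (sq_nonneg _)]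
  nlinarith

lemma integrable_cond_of_integrableOn {Ω E : Type*} [MeasurableSpace Ω] [NormedAddCommGroup E]
    {μ : Measure Ω} {s : Set Ω} {f : Ω → E} (hf : IntegrableOn f s μ) (hs : μ s ≠ 0) :
    Integrable f μ[|s] :=
  hf.smul_measure (ENNReal.inv_ne_top.2 hs)

lemma intervalIntegral_eq_mul_integral_cond {a b : ℝ} (hab : a < b) (f : ℝ → ℝ) :
    ∫ u in a..b, f u = (b - a) * ∫ u, f u ∂volume[|Ioc a b] := by
  rw [intervalIntegral.integral_of_le hab.le, ProbabilityTheory.cond, integral_smul_measure,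
    Real.volume_Ioc, ENNReal.toReal_inv, ENNReal.toReal_ofReal (sub_nonneg.2 hab.le), smul_eq_mul,
    mul_inv_cancel_left₀ (sub_pos.2 hab).ne']

theorem crps_exp_concave_general (a b : ℝ) (hab : a < b) (η : ℝ)
    (hη0 : 0 < η) (hη : η ≤ 1 / (2 * (b - a))) (y : ℝ) :
    ConcaveOn ℝ {F : ℝ → ℝ | IsPDF a b F}
      (fun F => Real.exp (-η * CRPS a b F y)) ∧
    ∀ (N : ℕ) (q : Fin N → ℝ), (∀ i, 0 ≤ q i) → ∑ i, q i = 1 →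
      ∀ F : Fin N → ℝ → ℝ, (∀ i, IsPDF a b (F i)) →
        ∑ i, q i * Real.exp (-η * CRPS a b (F i) y) ≤
          Real.exp (-η * CRPS a b (fun u => ∑ i, q i * F i u) y) := by
  have hκ₀ : 0 ≤ η * (b - a) := mul_nonneg hη0.le (sub_nonneg.2 hab.le)
  have hκ : η * (b - a) ≤ 1 / 2 := by
    have := (le_div_iff₀ (by linarith)).1 hη
    linarith
  have := cond_isProbabilityMeasure_of_finite (μ := volume) (s := Ioc a b) (by simp [hab])
    measure_Ioc_lt_top.ne
  have hCRPS : (fun F => exp (-η * CRPS a b F y)) =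
      fun F => exp (-∫ u, η * (b - a) * (F u - Heav (u - y)) ^ 2 ∂volume[|Ioc a b]) := by
    funext F
    rw [CRPS, intervalIntegral_eq_mul_integral_cond hab, integral_const_mul]
    congr 1
    ring
  have hconc : ConcaveOn ℝ {F : ℝ → ℝ | IsPDF a b F} fun F => exp (-η * CRPS a b F y) := by
    rw [hCRPS]
    refine concaveOn_exp_neg_integral (fun F hF => ?_) ?_
    · exact ((integrable_cond_of_integrableOn (hF.integrableOn_sq_sub_heav y)
        (by simp [hab])).const_mul _)
    · filter_upwards [ae_cond_mem measurableSet_Ioc] with u hu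
      exact concaveOn_exp_neg_mul_sq_eval_sub hκ₀ hκ (Ioc_subset_Icc_self hu) (heav_mem_Icc _)
  refine ⟨hconc, fun N q hq hq₁ F hF => ?_⟩
  have hmix : ∑ i, q i • F i = fun u => ∑ i, q i * F i u := by
    ext u
    simp [Finset.sum_apply]
  simpa [hmix] using hconc.le_map_sum (t := univ) (fun i _ => hq i) hq₁ (fun i _ => hF i)

/-- Exponential concavity of CRPS: for 0 < η ≤ 1/(2(b-a)) the map
F ↦ exp(-η CRPS(F,y)) is concave on the convex set of probability distribution
functions; in particular the weighted average satisfies the mixability inequality. -/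
theorem crps_exp_concave (a b : ℝ) (hab : a < b) (η : ℝ)
    (hη0 : 0 < η) (hη : η ≤ 1 / (2 * (b - a))) (y : ℝ) (hy : y ∈ Set.Icc a b) :
    ConcaveOn ℝ {F : ℝ → ℝ | IsPDF a b F}
      (fun F => Real.exp (-η * CRPS a b F y)) ∧
    ∀ (N : ℕ) (q : Fin N → ℝ), (∀ i, 0 ≤ q i) → ∑ i, q i = 1 →
      ∀ F : Fin N → ℝ → ℝ, (∀ i, IsPDF a b (F i)) →
        ∑ i, q i * Real.exp (-η * CRPS a b (F i) y) ≤
          Real.exp (-η * CRPS a b (fun u => ∑ i, q i * F i u) y) :=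
  crps_exp_concave_general a b hab η hη0 hη y
end
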